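/- arXiv:1808.07342 — 2 statements merged into one kernel-verified Lean document; each statement's English description precedes it below -/
import Mathlib

section
/- For a field k, the polynomial ring k[x₁,…,xₙ] is a free module over its subring of symmetric polynomials k[x₁,…,xₙ]^{Σₙ}. -/
open Polynomial MvPolynomial

namespace Stmt3Aux

variable (k : Type*) [Field k] (n : ℕ)

/-- `PP m = ∏_{i < m} (X + C xᵢ)`. -/
noncomputable def PP (m : ℕ) : Polynomial (MvPolynomial (Fin n) k) :=
  ∏ i ∈ Finset.univ.filter (fun i : Fin n => (i : ℕ) < m),
    (Polynomial.X + Polynomial.C (MvPolynomial.X i))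

/-- Chain of subalgebras interpolating between the symmetric subalgebra and everything. -/
noncomputable def AA (m : ℕ) : Subalgebra k (MvPolynomial (Fin n) k) :=
  Algebra.adjoin k (Set.range (PP k n m).coeff ∪ MvPolynomial.X '' {i : Fin n | m ≤ (i : ℕ)})

variable {k n}

lemma coeff_mem {m j : ℕ} : (PP k n m).coeff j ∈ AA k n m :=
  Algebra.subset_adjoin (Or.inl ⟨j, rfl⟩)

lemma X_mem {m : ℕ} {i : Fin n} (h : m ≤ (i : ℕ)) : MvPolynomial.X i ∈ AA k n m :=
  Algebra.subset_adjoin (Or.inr ⟨i, h, rfl⟩)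

lemma PP_monic (m : ℕ) : (PP k n m).Monic :=
  Polynomial.monic_prod_of_monic _ _ (fun i _ => Polynomial.monic_X_add_C _)

lemma PP_zero : PP k n 0 = 1 := by
  rw [PP]
  exact Finset.prod_eq_one (fun i hi => by simp at hi)

lemma PP_succ {m : ℕ} (hm : m < n) :
    PP k n (m + 1) = PP k n m * (Polynomial.X + Polynomial.C (MvPolynomial.X ⟨m, hm⟩)) := by
  rw [PP, PP, show Finset.univ.filter (fun i : Fin n => (i : ℕ) < m + 1)
      = insert (⟨m, hm⟩ : Fin n) (Finset.univ.filter (fun i : Fin n => (i : ℕ) < m)) from ?_,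
    Finset.prod_insert (by simp), mul_comm]
  ext i
  simp [Nat.lt_succ_iff_lt_or_eq, Fin.ext_iff, or_comm, Nat.le_iff_lt_or_eq]

lemma PP_natDegree : ∀ m, m ≤ n → (PP k n m).natDegree = m := by
  intro m
  induction m with
  | zero => intro _; rw [PP_zero]; simp
  | succ m ih =>
    intro hm
    rw [PP_succ hm, (PP_monic m).natDegree_mul (monic_X_add_C _), natDegree_X_add_C,
      ih (by omega)]

lemma coeff_PP_succ {m : ℕ} (hm : m < n) (j : ℕ) :
    (PP k n (m + 1)).coeff (j + 1)
      = (PP k n m).coeff j + MvPolynomial.X ⟨m, hm⟩ * (PP k n m).coeff (j + 1) := by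
  rw [PP_succ hm, mul_add, Polynomial.coeff_add, Polynomial.coeff_mul_X,
    mul_comm (PP k n m), Polynomial.coeff_C_mul]

lemma coeff_PP_succ_zero {m : ℕ} (hm : m < n) :
    (PP k n (m + 1)).coeff 0 = MvPolynomial.X ⟨m, hm⟩ * (PP k n m).coeff 0 := by
  rw [PP_succ hm, mul_add, Polynomial.coeff_add, Polynomial.coeff_mul_X_zero,
    mul_comm (PP k n m), Polynomial.coeff_C_mul, zero_add]

lemma AA_succ_le {m : ℕ} (hm : m < n) : AA k n (m + 1) ≤ AA k n m := by
  apply Algebra.adjoin_le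
  rintro p (⟨j, rfl⟩ | ⟨i, hi, rfl⟩)
  · match j with
    | 0 => rw [coeff_PP_succ_zero hm]; exact mul_mem (X_mem le_rfl) coeff_mem
    | j + 1 => rw [coeff_PP_succ hm]; exact add_mem coeff_mem (mul_mem (X_mem le_rfl) coeff_mem)
  · exact X_mem (by exact_mod_cast (Nat.le_of_succ_le hi))


-- the distinguished element
noncomputable def yy {k : Type*} [Field k] {n : ℕ} {m : ℕ} (hm : m < n) : MvPolynomial (Fin n) k :=
  -(MvPolynomial.X ⟨m, hm⟩)

/-- the span of `y^j`, `j ≤ m`, over `AA (m+1)` -/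
noncomputable def TT {k : Type*} [Field k] {n : ℕ} {m : ℕ} (hm : m < n) :
    Submodule (AA k n (m + 1)) (MvPolynomial (Fin n) k) :=
  Submodule.span (AA k n (m + 1)) (Set.range fun j : Fin (m + 1) => yy hm ^ (j : ℕ))

lemma smul_coe {k : Type*} [Field k] {n : ℕ} {m : ℕ} (a : AA k n m)
    (p : MvPolynomial (Fin n) k) : a • p = (a : MvPolynomial (Fin n) k) * p := rfl

lemma eval_PP_self {m : ℕ} (hm : m < n) :
    Polynomial.eval (yy hm) (PP k n (m + 1)) = 0 := by
  rw [PP, Polynomial.eval_prod]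
  apply Finset.prod_eq_zero (i := (⟨m, hm⟩ : Fin n))
  · simp
  · simp [yy]

lemma pow_succ_eq {m : ℕ} (hm : m < n) :
    yy hm ^ (m + 1)
      = -∑ j ∈ Finset.range (m + 1), (PP k n (m + 1)).coeff j * yy hm ^ j := by
  have h0 := eval_PP_self (k := k) hm
  rw [Polynomial.eval_eq_sum_range, PP_natDegree (m + 1) hm, Finset.sum_range_succ,
    show (PP k n (m+1)).coeff (m+1) = 1 from ?_, one_mul] at h0
  · linear_combination h0
  · have := (PP_monic (k := k) (n := n) (m + 1)).coeff_natDegree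
    rwa [PP_natDegree (m + 1) hm] at this

lemma pow_mem_T {m : ℕ} (hm : m < n) (N : ℕ) : yy (k := k) hm ^ N ∈ TT hm := by
  induction N using Nat.strong_induction_on with
  | _ N ih =>
    rcases le_or_gt N m with h | h
    · exact Submodule.subset_span ⟨⟨N, Nat.lt_succ_of_le h⟩, rfl⟩
    · obtain ⟨d, rfl⟩ : ∃ d, N = d + (m + 1) := ⟨N - (m + 1), by omega⟩
      rw [pow_add, pow_succ_eq hm, mul_neg, Finset.mul_sum, neg_mem_iff]
      apply Submodule.sum_mem
      intro j hj
      have : yy (k := k) hm ^ d * ((PP k n (m + 1)).coeff j * yy hm ^ j)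
          = (⟨(PP k n (m + 1)).coeff j, coeff_mem⟩ : AA k n (m + 1)) • yy hm ^ (d + j) := by
        rw [smul_coe, pow_add]; ring
      rw [this]
      exact Submodule.smul_mem _ _ (ih (d + j) (by simp at hj; omega))

lemma mul_mem_T {m : ℕ} (hm : m < n) {a b : MvPolynomial (Fin n) k}
    (ha : a ∈ TT hm) (hb : b ∈ TT hm) : a * b ∈ TT hm := by
  have h : TT (k := k) hm * TT hm ≤ TT hm := by
    rw [TT, Submodule.span_mul_span]
    apply Submodule.span_le.mpr
    rintro p hp
    rw [Set.mem_mul] at hp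
    obtain ⟨x, ⟨i, rfl⟩, y, ⟨j, rfl⟩, rfl⟩ := hp
    rw [← pow_add]
    exact pow_mem_T hm _
  exact h (Submodule.mul_mem_mul ha hb)

lemma AA_succ_mem_T {m : ℕ} (hm : m < n) {a : MvPolynomial (Fin n) k}
    (ha : a ∈ AA k n (m + 1)) : a ∈ TT hm := by
  have h1 : (1 : MvPolynomial (Fin n) k) ∈ TT (k := k) hm := by
    simpa using pow_mem_T hm 0
  have : a = (⟨a, ha⟩ : AA k n (m + 1)) • (1 : MvPolynomial (Fin n) k) := by
    rw [smul_coe, mul_one]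
  rw [this]
  exact Submodule.smul_mem _ _ h1

lemma X_last_mem_T {m : ℕ} (hm : m < n) : MvPolynomial.X (⟨m, hm⟩ : Fin n) ∈ TT (k := k) hm := by
  have : MvPolynomial.X (⟨m, hm⟩ : Fin n) = -(yy (k := k) hm ^ 1) := by simp [yy]
  rw [this]
  exact neg_mem (pow_mem_T hm 1)

lemma coeff_PP_mem_T {m : ℕ} (hm : m < n) :
    ∀ t j, m ≤ j + t → (PP k n m).coeff j ∈ TT hm := by
  intro t
  induction t with
  | zero =>
    intro j hj
    rcases eq_or_lt_of_le hj with h | h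
    · have hjm : j = m := by omega
      subst hjm
      have h2 : (PP k n j).coeff j = 1 := by
        have := (PP_monic (k := k) (n := n) j).coeff_natDegree
        rwa [PP_natDegree j (by omega)] at this
      rw [h2]; simpa using pow_mem_T hm 0
    · rw [Polynomial.coeff_eq_zero_of_natDegree_lt (by rw [PP_natDegree m (by omega)]; omega)]
      exact zero_mem _
  | succ t ih =>
    intro j hj
    by_cases h : m ≤ j + t
    · exact ih j h
    · have h1 : (PP k n m).coeff j
          = (PP k n (m + 1)).coeff (j + 1) - MvPolynomial.X ⟨m, hm⟩ * (PP k n m).coeff (j + 1) := by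
        rw [coeff_PP_succ hm]; ring
      rw [h1]
      exact sub_mem (AA_succ_mem_T hm coeff_mem)
        (mul_mem_T hm (X_last_mem_T hm) (ih (j + 1) (by omega)))

lemma AA_mem_T {m : ℕ} (hm : m < n) {p : MvPolynomial (Fin n) k}
    (hp : p ∈ AA k n m) : p ∈ TT hm := by
  let T' : Subalgebra k (MvPolynomial (Fin n) k) :=
    { carrier := (TT (k := k) hm : Set (MvPolynomial (Fin n) k))
      add_mem' := fun ha hb => add_mem ha hb
      mul_mem' := fun ha hb => mul_mem_T hm ha hb
      one_mem' := by simpa using pow_mem_T (k := k) hm 0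
      zero_mem' := zero_mem _
      algebraMap_mem' := fun r => AA_succ_mem_T hm (Subalgebra.algebraMap_mem _ r) }
  have hle : AA k n m ≤ T' := by
    apply Algebra.adjoin_le
    rintro p (⟨j, rfl⟩ | ⟨i, hi, rfl⟩)
    · exact coeff_PP_mem_T hm m j (by omega)
    · rcases Nat.eq_or_lt_of_le (show m ≤ (i : ℕ) from hi) with h | h
      · have : i = (⟨m, hm⟩ : Fin n) := by apply Fin.ext; simp [← h]
        rw [this]; exact X_last_mem_T hm
      · exact AA_succ_mem_T hm (X_mem (by exact_mod_cast h))
  exact hle hp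


lemma rename_coeff_PP (m j : ℕ) (σ : Equiv.Perm (Fin n))
    (hσ : ∀ i : Fin n, (i : ℕ) < m ↔ ((σ i : Fin n) : ℕ) < m) :
    rename σ ((PP k n m).coeff j) = (PP k n m).coeff j := by
  have h : (PP k n m).map ((rename σ : MvPolynomial (Fin n) k →ₐ[k] _) :
      MvPolynomial (Fin n) k →+* MvPolynomial (Fin n) k) = PP k n m := by
    rw [PP, Polynomial.map_prod]
    simp only [Polynomial.map_add, Polynomial.map_X, Polynomial.map_C, AlgHom.coe_toRingHom,
      rename_X]
    apply Finset.prod_nbij' (fun a => σ a) (fun a => σ.symm a)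
    · intro a ha
      simp only [Finset.mem_filter, Finset.mem_univ, true_and] at ha ⊢
      exact (hσ a).mp ha
    · intro a ha
      simp only [Finset.mem_filter, Finset.mem_univ, true_and] at ha ⊢
      have := (hσ (σ.symm a)).symm
      rw [Equiv.apply_symm_apply] at this
      exact this.mp ha
    · intro a _; simp
    · intro a _; simp
    · intro a _; rfl
  conv_rhs => rw [← h]
  rw [Polynomial.coeff_map]
  rfl

lemma rename_fix {m : ℕ} (hm : m < n) (σ : Equiv.Perm (Fin n))
    (hσ1 : ∀ i : Fin n, (i : ℕ) < m + 1 ↔ ((σ i : Fin n) : ℕ) < m + 1)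
    (hσ2 : ∀ i : Fin n, m + 1 ≤ (i : ℕ) → σ i = i)
    {p : MvPolynomial (Fin n) k} (hp : p ∈ AA k n (m + 1)) : rename σ p = p := by
  induction hp using Algebra.adjoin_induction with
  | mem x hx =>
    rcases hx with ⟨j, rfl⟩ | ⟨i, hi, rfl⟩
    · exact rename_coeff_PP (m + 1) j σ hσ1
    · rw [rename_X, hσ2 i hi]
  | algebraMap r => rw [MvPolynomial.algebraMap_eq, rename_C]
  | add x y hx hy ihx ihy => rw [map_add, ihx, ihy]
  | mul x y hx hy ihx ihy => rw [map_mul, ihx, ihy]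

lemma swap_cond {m : ℕ} (hm : m < n) (i : Fin (m + 1)) :
    (∀ a : Fin n, (a : ℕ) < m + 1 ↔
        ((Equiv.swap (Fin.castLE hm i) ⟨m, hm⟩ a : Fin n) : ℕ) < m + 1) ∧
      ∀ a : Fin n, m + 1 ≤ (a : ℕ) → Equiv.swap (Fin.castLE hm i) ⟨m, hm⟩ a = a := by
  have hi : ((Fin.castLE hm i : Fin n) : ℕ) < m + 1 := by
    simp only [Fin.coe_castLE]; exact i.2
  constructor
  · intro a
    rcases eq_or_ne a (Fin.castLE hm i) with rfl | h1
    · rw [Equiv.swap_apply_left]; simp only [Fin.coe_castLE, Fin.val_mk]; omega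
    rcases eq_or_ne a (⟨m, hm⟩ : Fin n) with rfl | h2
    · rw [Equiv.swap_apply_right]; simp only [Fin.coe_castLE, Fin.val_mk]; omega
    · rw [Equiv.swap_apply_of_ne_of_ne h1 h2]
  · intro a ha
    apply Equiv.swap_apply_of_ne_of_ne
    · intro h; rw [h] at ha; simp only [Fin.coe_castLE] at ha; omega
    · intro h; rw [h] at ha; simp only [Fin.val_mk] at ha; omega

lemma linIndep_P {m : ℕ} (hm : m < n) :
    LinearIndependent (AA k n (m + 1)) (fun j : Fin (m + 1) => yy (k := k) hm ^ (j : ℕ)) := by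
  rw [Fintype.linearIndependent_iff]
  intro g hg
  set h : Polynomial (MvPolynomial (Fin n) k) :=
    ∑ j : Fin (m + 1), Polynomial.C ((g j : MvPolynomial (Fin n) k)) * Polynomial.X ^ (j : ℕ)
    with hh
  have hzero : h = 0 := by
    apply Polynomial.eq_zero_of_natDegree_lt_card_of_eval_eq_zero h
      (f := fun i : Fin (m + 1) => -(MvPolynomial.X (Fin.castLE hm i)))
    · intro a b hab
      have := neg_injective hab
      exact Fin.castLE_injective hm (MvPolynomial.X_injective this)
    · intro i
      obtain ⟨hσ1, hσ2⟩ := swap_cond hm i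
      set σ := Equiv.swap (Fin.castLE hm i) (⟨m, hm⟩ : Fin n)
      have h0 : rename σ (∑ j : Fin (m + 1),
          g j • yy (k := k) hm ^ (j : ℕ)) = 0 := by rw [hg, map_zero]
      rw [map_sum] at h0
      have heq : ∀ j : Fin (m + 1),
          rename σ (g j • yy (k := k) hm ^ (j : ℕ))
            = (g j : MvPolynomial (Fin n) k) * (-(MvPolynomial.X (Fin.castLE hm i))) ^ (j : ℕ) := by
        intro j
        rw [smul_coe, map_mul, rename_fix hm σ hσ1 hσ2 (g j).2, map_pow]
        congr 2
        rw [yy, map_neg, rename_X]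
        congr 2
        exact Equiv.swap_apply_right _ _
      simp only [heq] at h0
      rw [hh]
      rw [Polynomial.eval_finset_sum]
      simpa using h0
    · rw [Fintype.card_fin]
      have : h.natDegree ≤ m := by
        apply Polynomial.natDegree_sum_le_of_forall_le
        intro j _
        exact (Polynomial.natDegree_C_mul_X_pow_le _ _).trans (by omega)
      omega
  intro j
  have hcoeff : h.coeff (j : ℕ) = (g j : MvPolynomial (Fin n) k) := by
    rw [hh, Polynomial.finset_sum_coeff]
    rw [Finset.sum_eq_single j]
    · simp
    · intro b _ hbj
      rw [Polynomial.coeff_C_mul, Polynomial.coeff_X_pow, if_neg (by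
        intro hb; exact hbj (Fin.ext hb.symm)), mul_zero]
    · simp
  have : (g j : MvPolynomial (Fin n) k) = 0 := by rw [← hcoeff, hzero]; simp
  exact Subtype.ext this


lemma yy_mem {m : ℕ} (hm : m < n) : yy (k := k) hm ∈ AA k n m := by
  rw [yy]
  exact neg_mem (X_mem (by simp))

lemma yy_pow_mem {m : ℕ} (hm : m < n) (j : ℕ) : yy (k := k) hm ^ j ∈ AA k n m :=
  pow_mem (yy_mem hm) j



set_option maxHeartbeats 1000000 in
set_option synthInstance.maxHeartbeats 1000000 in
lemma step_free_abstract {k R : Type*} [CommRing k] [CommRing R] [Algebra k R]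
    (A B : Subalgebra k R) (hAB : A ≤ B) {ι : Type*} (v : ι → R)
    (hv : ∀ i, v i ∈ B)
    (hli : LinearIndependent A v)
    (hsp : ∀ b : R, b ∈ B → b ∈ Submodule.span A (Set.range v))
    (hfree : Module.Free B R) : Module.Free A R := by
  letI alg : Algebra A B :=
    RingHom.toAlgebra (Subalgebra.inclusion hAB : A →ₐ[k] B).toRingHom
  haveI : IsScalarTower A B R := IsScalarTower.of_algebraMap_eq (fun a => rfl)
  let f : B →ₗ[A] R :=
    { toFun := Subtype.val
      map_add' := fun a b => rfl
      map_smul' := fun a x => rfl }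
  let w : ι → B := fun i => ⟨v i, hv i⟩
  have hfw : f ∘ w = v := rfl
  have hli' : LinearIndependent A w := by
    apply LinearIndependent.of_comp f
    rw [show (f ∘ w : ι → R) = v from rfl]
    exact hli
  have hsp' : ⊤ ≤ Submodule.span A (Set.range w) := by
    intro x _
    have hx : (x : R) ∈ Submodule.span A (Set.range v) := hsp x x.2
    rw [show Set.range v = f '' (Set.range w) from by rw [← Set.range_comp, hfw],
      Submodule.span_image] at hx
    obtain ⟨x', hx', hxx⟩ := hx
    have : x' = x := Subtype.ext hxx
    rwa [← this]
  let b : Module.Basis ι A B := Module.Basis.mk hli' hsp'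
  let c := Module.Free.chooseBasis B R
  exact Module.Free.of_basis (b.smulTower c)

lemma step_free {k : Type*} [Field k] {n : ℕ} {m : ℕ} (hm : m < n)
    (h : Module.Free (AA k n m) (MvPolynomial (Fin n) k)) :
    Module.Free (AA k n (m + 1)) (MvPolynomial (Fin n) k) := by
  apply step_free_abstract (AA k n (m + 1)) (AA k n m) (AA_succ_le hm)
    (fun j : Fin (m + 1) => yy (k := k) hm ^ (j : ℕ))
    (fun j => yy_pow_mem hm _) (linIndep_P hm)
    (fun b hb => AA_mem_T hm hb) h

lemma AA_zero_eq_top : AA k n 0 = ⊤ := by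
  apply top_unique
  rw [← MvPolynomial.adjoin_range_X]
  apply Algebra.adjoin_mono
  rintro p ⟨i, rfl⟩
  exact Or.inr ⟨i, Nat.zero_le _, rfl⟩

lemma free_zero : Module.Free (AA k n 0) (MvPolynomial (Fin n) k) := by
  have h1 : LinearIndependent (AA k n 0) (fun _ : Fin 1 => (1 : MvPolynomial (Fin n) k)) := by
    rw [Fintype.linearIndependent_iff]
    intro g hg u
    have : (g 0 : MvPolynomial (Fin n) k) * 1 = 0 := by simpa using hg
    have hu : u = 0 := Subsingleton.elim u 0
    subst hu
    rw [mul_one] at this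
    exact Subtype.ext this
  have h2 : ⊤ ≤ Submodule.span (AA k n 0)
      (Set.range fun _ : Fin 1 => (1 : MvPolynomial (Fin n) k)) := by
    intro p _
    have hp : p ∈ AA k n 0 := by rw [AA_zero_eq_top]; trivial
    have : p = (⟨p, hp⟩ : AA k n 0) • (1 : MvPolynomial (Fin n) k) := by
      change p = p * 1; rw [mul_one]
    rw [this]
    exact Submodule.smul_mem _ _ (Submodule.subset_span ⟨0, rfl⟩)
  exact Module.Free.of_basis (Module.Basis.mk h1 h2)

lemma free_AA : ∀ m, m ≤ n → Module.Free (AA k n m) (MvPolynomial (Fin n) k) := by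
  intro m
  induction m with
  | zero => intro _; exact free_zero
  | succ m ih => intro hm; exact step_free (by omega) (ih (by omega))

lemma PP_univ : PP k n n = ∏ i : Fin n, (Polynomial.X + Polynomial.C (MvPolynomial.X i)) := by
  rw [PP, Finset.filter_true_of_mem (fun i _ => i.2)]

lemma coeff_PP_top (j : ℕ) (hj : j ≤ n) :
    (PP k n n).coeff j = MvPolynomial.esymm (Fin n) k (n - j) := by
  rw [PP_univ]
  have := MvPolynomial.prod_X_add_C_coeff (σ := Fin n) (R := k) j
    (by rwa [Fintype.card_fin])
  rwa [Fintype.card_fin] at this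

lemma AA_top : AA k n n = MvPolynomial.symmetricSubalgebra (Fin n) k := by
  apply le_antisymm
  · apply Algebra.adjoin_le
    rintro p (⟨j, rfl⟩ | ⟨i, hi, rfl⟩)
    · simp only [SetLike.mem_coe]
      rw [MvPolynomial.mem_symmetricSubalgebra]
      intro σ
      exact rename_coeff_PP n j σ (fun i => by simp [i.2, (σ i).2])
    · exact absurd hi (by simp only [Set.mem_setOf_eq]; omega)
  · intro p hp
    obtain ⟨q, hq⟩ := MvPolynomial.esymmAlgHom_surjective (σ := Fin n) (R := k) (n := n)
      (by rw [Fintype.card_fin]) ⟨p, hp⟩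
    have hpq : p = aeval (fun i : Fin n => MvPolynomial.esymm (Fin n) k ((i : ℕ) + 1)) q := by
      rw [← MvPolynomial.esymmAlgHom_apply, hq]
    rw [hpq]
    have h2 : aeval (fun i : Fin n => MvPolynomial.esymm (Fin n) k ((i : ℕ) + 1)) q ∈
        Algebra.adjoin k (Set.range fun i : Fin n =>
          MvPolynomial.esymm (Fin n) k ((i : ℕ) + 1)) := by
      rw [Algebra.adjoin_range_eq_range_aeval]
      exact ⟨q, rfl⟩
    refine Algebra.adjoin_le ?_ h2
    rintro _ ⟨i, rfl⟩
    show MvPolynomial.esymm (Fin n) k ((i : ℕ) + 1) ∈ (AA k n n : Set (MvPolynomial (Fin n) k))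
    simp only [SetLike.mem_coe]
    have h3 : MvPolynomial.esymm (Fin n) k ((i : ℕ) + 1) = (PP k n n).coeff (n - ((i : ℕ) + 1)) := by
      rw [coeff_PP_top _ (by omega), show n - (n - ((i : ℕ) + 1)) = (i : ℕ) + 1 from by omega]
    rw [h3]
    exact coeff_mem

end Stmt3Aux

/-- For a field `k`, the polynomial ring `k[x₁,…,xₙ]` is a free module over its subring of
symmetric polynomials `k[x₁,…,xₙ]^{Σₙ}`. -/
theorem stmt_3 (k : Type*) [Field k] (n : ℕ) :
    Module.Free (MvPolynomial.symmetricSubalgebra (Fin n) k) (MvPolynomial (Fin n) k) := by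
  rw [← Stmt3Aux.AA_top]
  exact Stmt3Aux.free_AA n le_rfl
end

section
/- For a field k, the polynomial ring k[x₁,…,xₙ] is a free module of rank n! over the subring k[e₁,…,eₙ] generated by the elementary symmetric polynomials. -/
open MvPolynomial

namespace Stmt4Aux

lemma multiset_esymm_cons {R : Type*} [CommSemiring R] (a : R) (s : Multiset R) (t : ℕ) :
    (a ::ₘ s).esymm (t + 1) = s.esymm (t + 1) + a * s.esymm t := by
  simp only [Multiset.esymm, Multiset.powersetCard_cons, Multiset.map_add, Multiset.sum_add,
    Multiset.map_map, Function.comp_def, Multiset.prod_cons]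
  rw [Multiset.sum_map_mul_left]

variable (k : Type*) [Field k]

/-- The subalgebra generated by the elementary symmetric polynomials. -/
noncomputable def EE (n : ℕ) : Subalgebra k (MvPolynomial (Fin n) k) :=
  Algebra.adjoin k (Set.range fun i : Fin n => MvPolynomial.esymm (Fin n) k (i + 1))

variable {k}
variable {n : ℕ}

lemma esymm_mem {t : ℕ} (h1 : 1 ≤ t) (h2 : t ≤ n) : esymm (Fin n) k t ∈ EE k n := by
  apply Algebra.subset_adjoin
  refine ⟨⟨t - 1, by omega⟩, ?_⟩
  show esymm (Fin n) k ((t - 1) + 1) = _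
  rw [Nat.sub_add_cancel h1]

lemma esymm_zero_of_lt {t : ℕ} (h : n < t) : esymm (Fin n) k t = 0 := by
  rw [MvPolynomial.esymm, Finset.powersetCard_eq_empty.2 (by simpa using h), Finset.sum_empty]

lemma univ_val_succ :
    (Finset.univ.val.map (X : Fin (n + 1) → MvPolynomial (Fin (n + 1)) k)) =
      X 0 ::ₘ (Finset.univ.val.map fun i : Fin n => X i.succ) := by
  rw [Fin.univ_succ, Finset.cons_val, Multiset.map_cons, Finset.map_val, Multiset.map_map]
  rfl

lemma esymm_rec (t : ℕ) :
    esymm (Fin (n + 1)) k (t + 1) =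
      rename Fin.succ (esymm (Fin n) k (t + 1)) + X 0 * rename Fin.succ (esymm (Fin n) k t) := by
  have h : ∀ s : ℕ, rename (R := k) Fin.succ (esymm (Fin n) k s)
      = (Finset.univ.val.map fun i : Fin n =>
          (X i.succ : MvPolynomial (Fin (n + 1)) k)).esymm s := by
    intro s
    have h0 : rename (R := k) (Fin.succ) (esymm (Fin n) k s)
        = aeval (fun i : Fin n => (X (Fin.succ i) : MvPolynomial (Fin (n + 1)) k))
            (esymm (Fin n) k s) := by
      rw [show (rename (R := k) (Fin.succ : Fin n → Fin (n + 1))) = aeval (fun i : Fin n => (X (Fin.succ i) : MvPolynomial (Fin (n + 1)) k)) from algHom_ext fun i => by rw [rename_X, aeval_X]]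
    rw [h0, aeval_esymm_eq_multiset_esymm]
  rw [esymm_eq_multiset_esymm, univ_val_succ, multiset_esymm_cons, h, h]

lemma x0_pow_rel : ∃ γ : Fin (n + 1) → EE k (n + 1),
    (X 0 : MvPolynomial (Fin (n + 1)) k) ^ (n + 1)
      = ∑ j : Fin (n + 1), (γ j : MvPolynomial (Fin (n + 1)) k) * (X 0) ^ (j : ℕ) := by
  classical
  set S := MvPolynomial (Fin (n + 1)) k
  set M : Multiset S := Finset.univ.val.map X with hM
  have hcard : Multiset.card M = n + 1 := by simp [hM]
  set f : Polynomial S := (M.map fun r => Polynomial.X - Polynomial.C r).prod with hf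
  have hdeg : f.natDegree ≤ n + 1 := by
    refine le_trans (Polynomial.natDegree_multiset_prod_le _) ?_
    rw [Multiset.map_map]
    rw [show (Polynomial.natDegree ∘ fun r : S => Polynomial.X - Polynomial.C r) = fun _ => 1 from
      funext fun x => Polynomial.natDegree_X_sub_C x, Multiset.map_const', hcard,
      Multiset.sum_replicate, smul_eq_mul, mul_one]
  have heval : Polynomial.eval (X 0 : S) f = 0 := by
    rw [hf, Polynomial.eval_multiset_prod]
    apply Multiset.prod_eq_zero
    rw [Multiset.map_map]
    refine Multiset.mem_map.2 ⟨X 0, ?_, by simp⟩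
    exact Multiset.mem_map.2 ⟨0, by simp, rfl⟩
  have hcoeff : ∀ j : ℕ, j ≤ n + 1 →
      f.coeff j = (-1 : S) ^ (n + 1 - j) * esymm (Fin (n + 1)) k (n + 1 - j) := by
    intro j hj
    rw [hf, Multiset.prod_X_sub_C_coeff M (by rw [hcard]; exact hj), hcard]
    congr 1
    rw [esymm_eq_multiset_esymm]
  have h0 : (0 : S) = ∑ j ∈ Finset.range (n + 2), f.coeff j * (X 0 : S) ^ j := by
    rw [← heval]
    exact Polynomial.eval_eq_sum_range' (lt_of_le_of_lt hdeg (by omega)) _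
  rw [Finset.sum_range_succ] at h0
  have hl : f.coeff (n + 1) = 1 := by
    rw [hcoeff (n + 1) le_rfl, Nat.sub_self, pow_zero, one_mul, esymm_zero]
  rw [hl, one_mul] at h0
  have hmem : ∀ j : Fin (n + 1), -(f.coeff (j : ℕ)) ∈ EE k (n + 1) := by
    intro j
    rw [hcoeff (j : ℕ) (by omega)]
    refine neg_mem (mul_mem (pow_mem (neg_mem (one_mem _)) _) ?_)
    exact esymm_mem (by omega) (by omega)
  refine ⟨fun j => ⟨-(f.coeff (j : ℕ)), hmem j⟩, ?_⟩
  have : ∑ j : Fin (n + 1), -(f.coeff (j : ℕ)) * (X 0 : S) ^ (j : ℕ)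
      = ∑ j ∈ Finset.range (n + 1), -(f.coeff j) * (X 0 : S) ^ j :=
    Fin.sum_univ_eq_sum_range (fun j => -(f.coeff j) * (X 0 : S) ^ j) (n + 1)
  rw [this]
  have h1 : (X 0 : S) ^ (n + 1)
      = -∑ j ∈ Finset.range (n + 1), f.coeff j * (X 0 : S) ^ j := by
    linear_combination -h0
  rw [h1, ← Finset.sum_neg_distrib]
  exact Finset.sum_congr rfl fun j _ => by ring

lemma finSuccEquiv_rename_succ (p : MvPolynomial (Fin n) k) :
    finSuccEquiv k n (rename Fin.succ p) = Polynomial.C p := by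
  induction p using MvPolynomial.induction_on with
  | C r =>
      rw [rename_C]
      have : (C r : MvPolynomial (Fin (n + 1)) k) = algebraMap k _ r := rfl
      simp [finSuccEquiv_apply, algebraMap_eq]
  | add p q hp hq => rw [map_add, map_add, hp, hq, map_add]
  | mul_X p i hp => rw [map_mul, map_mul, rename_X, hp, finSuccEquiv_X_succ, map_mul]

lemma coeff_finSuccEquiv_mem {γ : MvPolynomial (Fin (n + 1)) k} (hγ : γ ∈ EE k (n + 1)) :
    ∀ l : ℕ, ((finSuccEquiv k n γ).coeff l) ∈ EE k n := by
  induction hγ using Algebra.adjoin_induction with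
  | mem x hx =>
      obtain ⟨i, rfl⟩ := hx
      intro l
      have hi := i.is_lt
      have hmem1 : esymm (Fin n) k ((i : ℕ) + 1) ∈ EE k n := by
        by_cases h : (i : ℕ) + 1 ≤ n
        · exact esymm_mem (by omega) h
        · rw [esymm_zero_of_lt (by omega)]; exact zero_mem _
      have hmem2 : esymm (Fin n) k (i : ℕ) ∈ EE k n := by
        by_cases h : (i : ℕ) = 0
        · rw [h, esymm_zero]; exact one_mem _
        · exact esymm_mem (by omega) (by omega)
      have heq : (finSuccEquiv k n) (esymm (Fin (n + 1)) k ((i : ℕ) + 1))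
          = Polynomial.C (esymm (Fin n) k ((i : ℕ) + 1))
            + Polynomial.C (esymm (Fin n) k (i : ℕ)) * Polynomial.X := by
        rw [esymm_rec, map_add, map_mul, finSuccEquiv_X_zero, finSuccEquiv_rename_succ,
          finSuccEquiv_rename_succ, Polynomial.X_mul_C]
      show ((finSuccEquiv k n) (esymm (Fin (n + 1)) k ((i : ℕ) + 1))).coeff l ∈ EE k n
      rw [heq, Polynomial.coeff_add, Polynomial.coeff_C, ← pow_one (Polynomial.X :
        Polynomial (MvPolynomial (Fin n) k)), Polynomial.coeff_C_mul, Polynomial.coeff_X_pow]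
      rcases l with _ | _ | l
      · simpa using hmem1
      · simpa using hmem2
      · simpa using zero_mem (EE k n)
  | algebraMap r =>
      intro l
      have : (algebraMap k (MvPolynomial (Fin (n + 1)) k) r) = C r := rfl
      rw [this]
      have h2 : finSuccEquiv k n (C r) = Polynomial.C (C r) := by
        have : (C r : MvPolynomial (Fin (n + 1)) k) = rename Fin.succ (C r) := by rw [rename_C]
        rw [this, finSuccEquiv_rename_succ]
      rw [h2, Polynomial.coeff_C]
      split
      · exact (EE k n).algebraMap_mem r
      · exact zero_mem _
  | add x y hx hy ihx ihy =>
      intro l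
      rw [map_add, Polynomial.coeff_add]
      exact add_mem (ihx l) (ihy l)
  | mul x y hx hy ihx ihy =>
      intro l
      rw [map_mul, Polynomial.coeff_mul]
      exact sum_mem fun p _ => mul_mem (ihx p.1) (ihy p.2)

lemma perm_fixes_E {γ : MvPolynomial (Fin n) k} (hγ : γ ∈ EE k n) (σ : Equiv.Perm (Fin n)) :
    rename σ γ = γ := by
  induction hγ using Algebra.adjoin_induction with
  | mem x hx =>
      obtain ⟨i, rfl⟩ := hx
      exact esymm_isSymmetric (Fin n) k _ σ
  | algebraMap r =>
      have : (algebraMap k (MvPolynomial (Fin n) k) r) = C r := rfl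
      rw [this, rename_C]
  | add x y hx hy ihx ihy => rw [map_add, ihx, ihy]
  | mul x y hx hy ihx ihy => rw [map_mul, ihx, ihy]

lemma rename_mem_adjoin {δ : MvPolynomial (Fin n) k} (hδ : δ ∈ EE k n) :
    rename (Fin.succ) δ ∈ Algebra.adjoin k (Set.range fun i : Fin n =>
      (rename Fin.succ (esymm (Fin n) k (i + 1)) : MvPolynomial (Fin (n + 1)) k)) := by
  have h1 : rename (R := k) (Fin.succ : Fin n → Fin (n + 1)) δ ∈
      Subalgebra.map (rename (R := k) (Fin.succ : Fin n → Fin (n + 1))) (EE k n) :=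
    Subalgebra.mem_map.2 ⟨δ, hδ, rfl⟩
  rw [EE, AlgHom.map_adjoin] at h1
  convert h1 using 2
  rw [← Set.range_comp]
  rfl

lemma li_x0_pows {g : Fin (n + 1) → EE k (n + 1)}
    (h : ∑ j : Fin (n + 1), (g j : MvPolynomial (Fin (n + 1)) k) * (X 0) ^ (j : ℕ) = 0) :
    ∀ j, g j = 0 := by
  classical
  set S := MvPolynomial (Fin (n + 1)) k
  have hall : ∀ w : Fin (n + 1), ∑ j : Fin (n + 1), (g j : S) * (X w) ^ (j : ℕ) = 0 := by
    intro w
    have h2 := congrArg (rename (R := k) (Equiv.swap (0 : Fin (n + 1)) w)) h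
    rw [map_sum, map_zero] at h2
    rw [← h2]
    refine Finset.sum_congr rfl fun j _ => ?_
    rw [map_mul, map_pow, rename_X, perm_fixes_E (g j).2, Equiv.swap_apply_left]
  set h : Polynomial S := ∑ j : Fin (n + 1), Polynomial.C ((g j : S)) * Polynomial.X ^ (j : ℕ)
    with hh
  have hdeg : h.natDegree ≤ n := by
    refine Polynomial.natDegree_sum_le_of_forall_le _ _ fun j _ => ?_
    exact le_trans (Polynomial.natDegree_C_mul_X_pow_le _ _) (by omega)
  have hz : h = 0 := by
    refine Polynomial.eq_zero_of_natDegree_lt_card_of_eval_eq_zero' h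
      (Finset.univ.image (X : Fin (n + 1) → S)) ?_ ?_
    · intro r hr
      obtain ⟨w, _, rfl⟩ := Finset.mem_image.1 hr
      rw [hh, Polynomial.eval_finset_sum]
      rw [← hall w]
      refine Finset.sum_congr rfl fun j _ => ?_
      rw [Polynomial.eval_mul, Polynomial.eval_C, Polynomial.eval_pow, Polynomial.eval_X]
    · rw [Finset.card_image_of_injective _ (MvPolynomial.X_injective), Finset.card_univ,
        Fintype.card_fin]
      omega
  intro j
  have hc : (g j : S) = h.coeff (j : ℕ) := by
    rw [hh, Polynomial.finset_sum_coeff]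
    rw [Finset.sum_eq_single j]
    · rw [Polynomial.coeff_C_mul, Polynomial.coeff_X_pow, if_pos rfl, mul_one]
    · intro b _ hbj
      rw [Polynomial.coeff_C_mul, Polynomial.coeff_X_pow,
        if_neg (fun hc => hbj (Fin.ext hc.symm)), mul_zero]
    · intro hj; exact absurd (Finset.mem_univ j) hj
  have : (g j : S) = 0 := by rw [hc, hz, Polynomial.coeff_zero]
  exact Subtype.ext this

theorem key (n : ℕ) : Nonempty (Module.Basis (Fin (Nat.factorial n)) (EE k n) (MvPolynomial (Fin n) k)) := by
  induction n with
  | zero =>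
      have hE : ∀ s : MvPolynomial (Fin 0) k, s ∈ EE k 0 := by
        intro s
        obtain ⟨r, rfl⟩ := C_surjective (Fin 0) s
        exact (EE k 0).algebraMap_mem r
      have hli : LinearIndependent (EE k 0) (fun _ : Fin (Nat.factorial 0) =>
          (1 : MvPolynomial (Fin 0) k)) := by
        rw [Fintype.linearIndependent_iff]
        intro g hg i
        have h1 : ∑ i : Fin (Nat.factorial 0), (g i : MvPolynomial (Fin 0) k) = 0 := by
          rw [← hg]
          refine Finset.sum_congr rfl fun i _ => ?_
          rw [Subalgebra.smul_def, smul_eq_mul, mul_one]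
        haveI : Subsingleton (Fin (Nat.factorial 0)) := Fin.subsingleton_one
        have h2 : (g i : MvPolynomial (Fin 0) k) = 0 := by
          have huniv : (Finset.univ : Finset (Fin (Nat.factorial 0))) = {i} := by
            apply Finset.eq_singleton_iff_unique_mem.2
            exact ⟨Finset.mem_univ i, fun x _ => Subsingleton.elim x i⟩
          rwa [huniv, Finset.sum_singleton] at h1
        exact Subtype.ext h2
      have hsp : ⊤ ≤ Submodule.span (EE k 0)
          (Set.range fun _ : Fin (Nat.factorial 0) => (1 : MvPolynomial (Fin 0) k)) := by
        intro s _
        have : s = (⟨s, hE s⟩ : EE k 0) • (1 : MvPolynomial (Fin 0) k) := by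
          rw [Subalgebra.smul_def, smul_eq_mul, mul_one]
        rw [this]
        exact Submodule.smul_mem _ _ (Submodule.subset_span ⟨⟨0, by norm_num⟩, rfl⟩)
      exact ⟨Module.Basis.mk hli hsp⟩
  | succ n ih =>
      obtain ⟨b⟩ := ih
      classical
      set S := MvPolynomial (Fin (n + 1)) k
      set c : Fin (Nat.factorial n) → S := fun i => rename Fin.succ (b i) with hc
      set m : Fin (Nat.factorial n) × Fin (n + 1) → S :=
        fun p => c p.1 * (X 0) ^ ((p.2 : ℕ)) with hm
      obtain ⟨γ, hγ⟩ := x0_pow_rel (k := k) (n := n)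
      set M := Submodule.span (EE k (n + 1)) (Set.range m) with hMdef
      -- L1
      have L1 : ∀ j : ℕ, ∀ i, c i * (X 0 : S) ^ j ∈ M := by
        intro j
        induction j using Nat.strong_induction_on with
        | _ j IH =>
          intro i
          by_cases hj : j ≤ n
          · exact Submodule.subset_span ⟨(i, ⟨j, by omega⟩), rfl⟩
          · have hj' : j = (j - (n + 1)) + (n + 1) := by omega
            rw [hj', pow_add, hγ]
            have heq : c i * ((X 0 : S) ^ (j - (n + 1)) *
                ∑ t : Fin (n + 1), (γ t : S) * (X 0) ^ (t : ℕ))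
                = ∑ t : Fin (n + 1), γ t • (c i * (X 0 : S) ^ (j - (n + 1) + (t : ℕ))) := by
              rw [Finset.mul_sum, Finset.mul_sum]
              refine Finset.sum_congr rfl fun t _ => ?_
              rw [Subalgebra.smul_def, smul_eq_mul, pow_add]
              ring
            rw [heq]
            refine Submodule.sum_mem _ fun t _ => Submodule.smul_mem _ _ ?_
            have ht := t.is_lt
            exact IH _ (by omega) i
      -- L2a
      have L2a : ∀ t : ℕ, t ≤ n → ∀ i, ∀ j : ℕ,
          rename Fin.succ (esymm (Fin n) k t) * (c i * (X 0 : S) ^ j) ∈ M := by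
        intro t
        induction t with
        | zero =>
            intro _ i j
            rw [esymm_zero, map_one, one_mul]
            exact L1 j i
        | succ t iht =>
            intro ht i j
            have hrec := esymm_rec (k := k) (n := n) t
            have hsub : rename (R := k) Fin.succ (esymm (Fin n) k (t + 1))
                = esymm (Fin (n + 1)) k (t + 1) -
                  X 0 * rename Fin.succ (esymm (Fin n) k t) := by
              rw [hrec]; ring
            rw [hsub, sub_mul]
            refine Submodule.sub_mem _ ?_ ?_
            · have hmem : esymm (Fin (n + 1)) k (t + 1) ∈ EE k (n + 1) :=
                esymm_mem (by omega) (by omega)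
              have heq : esymm (Fin (n + 1)) k (t + 1) * (c i * (X 0 : S) ^ j)
                  = (⟨_, hmem⟩ : EE k (n + 1)) • (c i * (X 0 : S) ^ j) := by
                rw [Subalgebra.smul_def, smul_eq_mul]
              rw [heq]
              exact Submodule.smul_mem _ _ (L1 j i)
            · have heq : (X 0 * rename (R := k) Fin.succ (esymm (Fin n) k t)) *
                  (c i * (X 0 : S) ^ j)
                  = rename Fin.succ (esymm (Fin n) k t) * (c i * (X 0 : S) ^ (j + 1)) := by
                rw [pow_succ]; ring
              rw [heq]
              exact iht (by omega) i (j + 1)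
      -- L2b
      have L2b : ∀ a ∈ Algebra.adjoin k (Set.range fun i : Fin n =>
          (rename Fin.succ (esymm (Fin n) k (i + 1)) : S)), ∀ z ∈ M, a * z ∈ M := by
        intro a ha
        induction ha using Algebra.adjoin_induction with
        | mem x hx =>
            obtain ⟨i, rfl⟩ := hx
            intro z hz
            induction hz using Submodule.span_induction with
            | mem w hw =>
                obtain ⟨⟨i', j⟩, rfl⟩ := hw
                exact L2a ((i : ℕ) + 1) (by omega) i' (j : ℕ)
            | zero => rw [mul_zero]; exact zero_mem _
            | add x' y' hx' hy' ihx ihy => rw [mul_add]; exact add_mem ihx ihy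
            | smul a' x' hx' ihx =>
                have heq : rename (R := k) Fin.succ (esymm (Fin n) k ((i : ℕ) + 1)) * (a' • x')
                    = a' • (rename Fin.succ (esymm (Fin n) k ((i : ℕ) + 1)) * x') := by
                  rw [Subalgebra.smul_def, Subalgebra.smul_def, smul_eq_mul, smul_eq_mul]
                  ring
                rw [heq]
                exact Submodule.smul_mem _ _ ihx
        | algebraMap r =>
            intro z hz
            have heq : (algebraMap k S r) * z = (algebraMap k (EE k (n + 1)) r) • z := by
              rw [Subalgebra.smul_def, smul_eq_mul]
              rfl
            rw [heq]
            exact Submodule.smul_mem _ _ hz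
        | add x y hx hy ihx ihy =>
            intro z hz
            rw [add_mul]
            exact add_mem (ihx z hz) (ihy z hz)
        | mul x y hx hy ihx ihy =>
            intro z hz
            rw [mul_assoc]
            exact ihx _ (ihy z hz)
      -- spanning
      have main : ∀ f : MvPolynomial (Fin n) k, ∀ l : ℕ,
          rename Fin.succ f * (X 0 : S) ^ l ∈ M := by
        intro f l
        have hf : f ∈ Submodule.span (EE k n) (Set.range ⇑b) := b.mem_span f
        induction hf using Submodule.span_induction with
        | mem z hz =>
            obtain ⟨i, rfl⟩ := hz
            exact L1 l i
        | zero => rw [map_zero, zero_mul]; exact zero_mem _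
        | add x y hx hy ihx ihy => rw [map_add, add_mul]; exact add_mem ihx ihy
        | smul δ x hx ihx =>
            rw [Subalgebra.smul_def, smul_eq_mul, map_mul, mul_assoc]
            exact L2b _ (rename_mem_adjoin δ.2) _ ihx
      have hsp : ⊤ ≤ M := by
        intro s _
        have hs : s = ∑ l ∈ Finset.range ((finSuccEquiv k n s).natDegree + 1),
            rename Fin.succ ((finSuccEquiv k n s).coeff l) * (X 0 : S) ^ l := by
          have h1 : s = (finSuccEquiv k n).symm (finSuccEquiv k n s) :=
            (AlgEquiv.symm_apply_apply _ _).symm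
          conv_lhs => rw [h1, Polynomial.as_sum_range_C_mul_X_pow (finSuccEquiv k n s)]
          rw [map_sum]
          refine Finset.sum_congr rfl fun l _ => ?_
          rw [map_mul, map_pow]
          congr 1
          · rw [← finSuccEquiv_rename_succ ((finSuccEquiv k n s).coeff l),
              AlgEquiv.symm_apply_apply]
          · congr 1
            rw [← finSuccEquiv_X_zero (R := k) (n := n), AlgEquiv.symm_apply_apply]
        rw [hs]
        exact Submodule.sum_mem _ fun l _ => main _ l
      -- linear independence
      have hli : LinearIndependent (EE k (n + 1)) m := by
        rw [Fintype.linearIndependent_iff]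
        intro g hg p
        set β : Fin (Nat.factorial n) → S :=
          fun i => ∑ j : Fin (n + 1), (g (i, j) : S) * (X 0) ^ (j : ℕ) with hβdef
        have hsum : ∑ i, β i * c i = 0 := by
          rw [← hg, Fintype.sum_prod_type]
          refine Finset.sum_congr rfl fun i _ => ?_
          rw [hβdef, Finset.sum_mul]
          refine Finset.sum_congr rfl fun j _ => ?_
          rw [Subalgebra.smul_def, smul_eq_mul, hm]
          ring
        have hβ : ∀ i, β i = 0 := by
          have hco : ∀ l i', ((finSuccEquiv k n (β i')).coeff l) ∈ EE k n := by
            intro l i'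
            rw [hβdef, map_sum, Polynomial.finset_sum_coeff]
            refine sum_mem fun j _ => ?_
            rw [map_mul, map_pow, finSuccEquiv_X_zero, Polynomial.coeff_mul_X_pow']
            split
            · exact coeff_finSuccEquiv_mem (g (i', j)).2 _
            · exact zero_mem _
          have h2 : ∀ l, ∑ i', ((finSuccEquiv k n (β i')).coeff l) * b i' = 0 := by
            intro l
            have h3 := congrArg (fun z => (finSuccEquiv k n z).coeff l) hsum
            simp only [map_sum, map_zero, Polynomial.coeff_zero,
              Polynomial.finset_sum_coeff] at h3
            rw [← h3]
            refine Finset.sum_congr rfl fun i' _ => ?_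
            rw [map_mul, hc, finSuccEquiv_rename_succ, Polynomial.coeff_mul_C]
          have h4 : ∀ l i', ((finSuccEquiv k n (β i')).coeff l) = 0 := by
            intro l
            have := (Fintype.linearIndependent_iff.1 b.linearIndependent)
              (fun i' => (⟨(finSuccEquiv k n (β i')).coeff l, hco l i'⟩ : EE k n)) ?_
            · intro i'
              exact congrArg Subtype.val (this i')
            · rw [← h2 l]
              refine Finset.sum_congr rfl fun i' _ => ?_
              rw [Subalgebra.smul_def, smul_eq_mul]
          intro i
          have h5 : finSuccEquiv k n (β i) = 0 := Polynomial.ext fun l => h4 l i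
          have h6 := congrArg (finSuccEquiv k n).symm h5
          rwa [AlgEquiv.symm_apply_apply, map_zero] at h6
        exact li_x0_pows (g := fun j => g (p.1, j)) (hβ p.1) p.2
      refine ⟨(Module.Basis.mk hli hsp).reindex
        (finProdFinEquiv.trans (finCongr ?_))⟩
      rw [Nat.factorial_succ, mul_comm]

end Stmt4Aux

/-- For a field `k`, the polynomial ring `k[x₁,…,xₙ]` is a free module of rank `n!` over the
subring generated by the elementary symmetric polynomials `e₁, …, eₙ`. -/
theorem stmt_4 (k : Type*) [Field k] (n : ℕ) :
    let E : Subalgebra k (MvPolynomial (Fin n) k) :=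
      Algebra.adjoin k (Set.range fun i : Fin n => MvPolynomial.esymm (Fin n) k (i + 1))
    Module.Free E (MvPolynomial (Fin n) k) ∧
      Module.rank E (MvPolynomial (Fin n) k) = Nat.factorial n := by
  intro E
  obtain ⟨b⟩ := Stmt4Aux.key (k := k) n
  constructor
  · exact Module.Free.of_basis b
  · haveI : IsDomain (Stmt4Aux.EE k n) := Subalgebra.isDomain _
    have hr := rank_eq_card_basis b
    rw [Fintype.card_fin] at hr
    exact hr
end
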